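/- Suppose x_1, …, x_n ∈ {i, j, k} ⊆ ℝ³ and L, R are two parenthesizations of the cross product x_1 × ⋯ × x_n such that every partial product occurring in the evaluation of L and of R lies in {±i, ±j, ±k} (in particular is nonzero). Then L = R. -/

import Mathlib

/-- A bracketed product: a full binary tree whose leaves carry values in `α`. -/
inductive LTree (α : Type*) : Type _
  | leaf (a : α) : LTree α
  | node (l r : LTree α) : LTree α

/-- Evaluate a bracketed product with respect to a binary operation `op`. -/
def LTree.evalWith {α : Type*} (op : α → α → α) : LTree α → α
  | .leaf a => a
  | .node l r => op (l.evalWith op) (r.evalWith op)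

/-- The ordered list of leaf values (the sequence of factors). -/
def LTree.leafList {α : Type*} : LTree α → List α
  | .leaf a => [a]
  | .node l r => l.leafList ++ r.leafList

/-- Sharpness: every partial product occurring in the evaluation lies in `S`. -/
def LTree.Sharp {α : Type*} (op : α → α → α) (S : Set α) : LTree α → Prop
  | .leaf a => a ∈ S
  | .node l r => l.Sharp op S ∧ r.Sharp op S ∧
      (LTree.node l r).evalWith op ∈ S

/-! For pure quaternions `u v = -(u ⬝ v) + u × v`, so `v ↦ v₀i + v₁j + v₂k` turns cross products
of orthogonal vectors into quaternion products, and two signed basis vectors with nonzero cross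
product are orthogonal. Hence on a sharp bracketing every partial product maps to the quaternion
product of its factors, which by associativity depends only on the sequence of factors. -/

open Matrix Quaternion

namespace LTree

variable {α M : Type*} {op : α → α → α} {S : Set α}

theorem Sharp.evalWith_mem : ∀ {t : LTree α}, t.Sharp op S → t.evalWith op ∈ S
  | .leaf _, h => h
  | .node _ _, h => h.2.2

variable [Monoid M] {f : α → M}

theorem map_evalWith_of_sharp
    (hf : ∀ u ∈ S, ∀ v ∈ S, op u v ∈ S → f (op u v) = f u * f v) :
    ∀ {t : LTree α}, t.Sharp op S → f (t.evalWith op) = (t.leafList.map f).prod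
  | .leaf _, _ => by simp [evalWith, leafList]
  | .node l r, ⟨hl, hr, hlr⟩ => by
    rw [evalWith, hf _ hl.evalWith_mem _ hr.evalWith_mem hlr, map_evalWith_of_sharp hf hl,
      map_evalWith_of_sharp hf hr, leafList, List.map_append, List.prod_append]

theorem evalWith_eq_of_sharp (hinj : Set.InjOn f S)
    (hf : ∀ u ∈ S, ∀ v ∈ S, op u v ∈ S → f (op u v) = f u * f v)
    {L R : LTree α} (hleaves : L.leafList = R.leafList) (hL : L.Sharp op S) (hR : R.Sharp op S) :
    L.evalWith op = R.evalWith op :=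
  hinj hL.evalWith_mem hR.evalWith_mem <| by
    rw [map_evalWith_of_sharp hf hL, map_evalWith_of_sharp hf hR, hleaves]

end LTree

def signedStdBasis : Set (Fin 3 → ℝ) :=
  {![1, 0, 0], -![1, 0, 0], ![0, 1, 0], -![0, 1, 0], ![0, 0, 1], -![0, 0, 1]}

def pureQuaternion (v : Fin 3 → ℝ) : ℍ[ℝ] := ⟨0, v 0, v 1, v 2⟩

theorem pureQuaternion_injective : Function.Injective pureQuaternion := by
  intro u v h
  obtain ⟨-, h0, h1, h2⟩ := QuaternionAlgebra.mk.inj h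
  ext x; fin_cases x <;> assumption

theorem pureQuaternion_mul_pureQuaternion (u v : Fin 3 → ℝ) :
    pureQuaternion u * pureQuaternion v = (-(u ⬝ᵥ v) : ℝ) + pureQuaternion (u ⨯₃ v) := by
  rw [Quaternion.ext_iff, Quaternion.re_mul, Quaternion.imI_mul, Quaternion.imJ_mul,
    Quaternion.imK_mul]
  simp only [Quaternion.re_add, Quaternion.imI_add, Quaternion.imJ_add, Quaternion.imK_add,
    Quaternion.re_coe, Quaternion.imI_coe, Quaternion.imJ_coe, Quaternion.imK_coe]
  simp only [pureQuaternion, dotProduct, Fin.sum_univ_three, cross_apply]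
  refine ⟨?_, ?_, ?_, ?_⟩ <;> simp <;> ring

theorem pureQuaternion_crossProduct_of_dotProduct_eq_zero {u v : Fin 3 → ℝ} (h : u ⬝ᵥ v = 0) :
    pureQuaternion (u ⨯₃ v) = pureQuaternion u * pureQuaternion v := by
  simp [pureQuaternion_mul_pureQuaternion, h]

theorem dotProduct_eq_zero_of_crossProduct_mem_signedStdBasis {u v : Fin 3 → ℝ}
    (hu : u ∈ signedStdBasis) (hv : v ∈ signedStdBasis) (huv : u ⨯₃ v ∈ signedStdBasis) :
    u ⬝ᵥ v = 0 := by
  simp only [signedStdBasis, Set.mem_insert_iff, Set.mem_singleton_iff] at hu hv huv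
  rcases hu with rfl | rfl | rfl | rfl | rfl | rfl <;>
    rcases hv with rfl | rfl | rfl | rfl | rfl | rfl <;>
    simp_all [cross_apply, dotProduct, Fin.sum_univ_three, funext_iff, Fin.forall_fin_succ]

theorem sharp_cross_bracketings_eq_general
    (i j k : Fin 3 → ℝ) (hi : i = ![1, 0, 0]) (hj : j = ![0, 1, 0])
    (hk : k = ![0, 0, 1])
    (cross : (Fin 3 → ℝ) → (Fin 3 → ℝ) → (Fin 3 → ℝ))
    (hcross : ∀ u v, cross u v = crossProduct u v)
    (L R : LTree (Fin 3 → ℝ))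
    (hleaves : L.leafList = R.leafList)
    (hL : L.Sharp cross {i, -i, j, -j, k, -k})
    (hR : R.Sharp cross {i, -i, j, -j, k, -k}) :
    L.evalWith cross = R.evalWith cross := by
  subst hi hj hk
  refine LTree.evalWith_eq_of_sharp pureQuaternion_injective.injOn
    (fun u hu v hv huv => ?_) hleaves hL hR
  rw [hcross] at huv ⊢
  exact pureQuaternion_crossProduct_of_dotProduct_eq_zero
    (dotProduct_eq_zero_of_crossProduct_mem_signedStdBasis hu hv huv)

/-- If `x₁, …, xₙ ∈ {i, j, k} ⊆ ℝ³` and `L, R` are two parenthesizations of the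
cross product `x₁ × ⋯ × xₙ` such that every partial product in the evaluation of
`L` and of `R` lies in `{±i, ±j, ±k}`, then `L = R`. -/
theorem sharp_cross_bracketings_eq
    (i j k : Fin 3 → ℝ) (hi : i = ![1, 0, 0]) (hj : j = ![0, 1, 0])
    (hk : k = ![0, 0, 1])
    (cross : (Fin 3 → ℝ) → (Fin 3 → ℝ) → (Fin 3 → ℝ))
    (hcross : ∀ u v, cross u v = crossProduct u v)
    (L R : LTree (Fin 3 → ℝ))
    (hleaves : L.leafList = R.leafList)
    (hx : ∀ x ∈ L.leafList, x ∈ ({i, j, k} : Set (Fin 3 → ℝ)))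
    (hL : L.Sharp cross {i, -i, j, -j, k, -k})
    (hR : R.Sharp cross {i, -i, j, -j, k, -k}) :
    L.evalWith cross = R.evalWith cross :=
  sharp_cross_bracketings_eq_general i j k hi hj hk cross hcross L R hleaves hL hR
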